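/- Let W = L_1...L_k be the Lyndon factorization of W and let W' = W L', where L' is a Lyndon word with L_k ≥_lex L'. Then the Lyndon factorization of W' is L_1, ..., L_k, L'; moreover, for any two positions i < j within W, the global suffix order of i and j in W' agrees with their order given by the compatibility theorem applied to the block L_1...L_k (i.e., appending a new smaller-or-equal Lyndon factor does not change the mutual order of suffixes restricted to earlier blocks). -/

import Mathlib

def IsLyndon {α : Type*} [LinearOrder α] (l : List α) : Prop :=
  l ≠ [] ∧ ∀ u v : List α, u ≠ [] → v ≠ [] → l = u ++ v → l < v ++ u

/-!
Every Lyndon word is `≤` each of its nonempty suffixes, and every nonempty suffix of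
`W = L₁ ⋯ Lₖ` begins with a nonempty suffix of some `Lₘ ≥ Lₖ`; hence `L' ≤ Lₖ` is `≤` every
nonempty suffix of `W`. Take `i < j`. If `W[j..]` is not a prefix of `W[i..]`, the two
suffixes already differ inside `W`, and appending `L'` does not affect the comparison.
Otherwise `W[i..] = W[j..] w` with `w` a nonempty suffix of `W`, so `L' ≤ w < w L'`, and both
comparisons put the suffix at `j` first.
-/

namespace List

section LinearOrder

variable {α : Type*} [LinearOrder α]

theorem lt_append_of_ne_nil (l : List α) {t : List α} (ht : t ≠ []) : l < l ++ t := by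
  obtain ⟨a, t, rfl⟩ := exists_cons_of_ne_nil ht
  simpa using append_left_lt (l₁ := l) (nil_lt_cons a t)

-- Core's `List.le_append_left` concerns core's `≤` on lists, not the one from `LinearOrder`.
theorem le_append_self (l t : List α) : l ≤ l ++ t := by
  rcases eq_or_ne t [] with rfl | ht
  · simp
  · exact (lt_append_of_ne_nil l ht).le

theorem append_lt_append_left_iff (c : List α) {a b : List α} : c ++ a < c ++ b ↔ a < b := by
  induction c with
  | nil => rfl
  | cons x c ih => simpa [cons_lt_cons_iff] using ih

theorem append_lt_append_of_lt_of_not_prefix {u v : List α} (h : u < v) (hp : ¬u <+: v)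
    (x y : List α) : u ++ x < v ++ y := by
  induction h with
  | nil => exact absurd nil_prefix hp
  | cons _ ih => exact Lex.cons (ih fun h => hp (cons_prefix_cons.2 ⟨rfl, h⟩))
  | rel h => exact Lex.rel h

theorem lt_iff_append_lt_append {u v L : List α} (hL : L ≠ []) (hlen : v.length < u.length)
    (hsuf : ∀ w, w <:+ u → w ≠ [] → L ≤ w) : u < v ↔ u ++ L < v ++ L := by
  by_cases hvu : v <+: u
  · obtain ⟨w, rfl⟩ := hvu
    have hw : w ≠ [] := by rintro rfl; simp at hlen
    have hLw : L < w ++ L := (hsuf w (suffix_append v w) hw).trans_lt (lt_append_of_ne_nil w hL)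
    refine iff_of_false (not_lt.2 (le_append_self v w)) (not_lt.2 (le_of_lt ?_))
    rw [append_assoc]
    exact append_left_lt hLw
  · have huv : ¬u <+: v := fun h => absurd h.length_le (by omega)
    refine ⟨fun h => append_lt_append_of_lt_of_not_prefix h huv L L, fun h => ?_⟩
    rcases lt_trichotomy u v with hlt | rfl | hgt
    · exact hlt
    · exact absurd h (lt_irrefl _)
    · exact absurd h (lt_asymm (append_lt_append_of_lt_of_not_prefix hgt hvu L L))

theorem drop_lt_drop_iff_append {W L : List α} (hL : L ≠ [])
    (hW : ∀ w, w <:+ W → w ≠ [] → L ≤ w) {i j : ℕ} (hij : i < j) (hj : j ≤ W.length) :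
    W.drop i < W.drop j ↔ (W ++ L).drop i < (W ++ L).drop j := by
  rw [drop_append_of_le_length (hij.le.trans hj), drop_append_of_le_length hj]
  exact lt_iff_append_lt_append hL (by simp; omega) fun w hw => hW w (hw.trans (drop_suffix i W))

end LinearOrder

theorem IsChain.getLast_le {β : Type*} [Preorder β] {l : List β} (h : l.IsChain (· ≥ ·))
    (hl : l ≠ []) : ∀ x ∈ l, l.getLast hl ≤ x :=
  h.backwards_induction (l.getLast hl ≤ ·) l (fun _ _ hxy h => h.trans hxy) fun _ => le_rfl

end List

open List

section Lyndon

variable {α : Type*} [LinearOrder α]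

theorem IsLyndon.le_of_suffix {l w : List α} (hl : IsLyndon l) (hw : w <:+ l) (hne : w ≠ []) :
    l ≤ w := by
  obtain ⟨u, rfl⟩ := hw
  rcases eq_or_ne u [] with rfl | hu
  · simp
  by_contra hlt
  rw [not_le] at hlt
  have hrot : u ++ w < w ++ u := hl.2 u w hu hne rfl
  by_cases hp : w <+: u ++ w
  · -- `u ++ w = w ++ r` has two rotations, forcing both `r < u` and `u < r`.
    obtain ⟨r, hr⟩ := hp
    have hlen : r.length = u.length := by
      have := congrArg length hr; simp at this; omega
    have hr' : r ≠ [] := ne_nil_of_length_pos (hlen ▸ length_pos_of_ne_nil hu)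
    have hru : r < u := (append_lt_append_left_iff w).1 (hr ▸ hrot)
    have hrot' : u ++ w < r ++ w := hr ▸ hl.2 w r hne hr' hr.symm
    have hnp : ¬r <+: u := fun h => (h.eq_of_length hlen ▸ hru : u < u).false
    exact lt_asymm hrot' (append_lt_append_of_lt_of_not_prefix hru hnp w w)
  · exact lt_asymm hrot (by simpa using append_lt_append_of_lt_of_not_prefix hlt hp u [])

theorem le_of_suffix_flatten {F : List (List α)} {m : List α} (hLy : ∀ l ∈ F, IsLyndon l)
    (hm : ∀ l ∈ F, m ≤ l) : ∀ w, w <:+ F.flatten → w ≠ [] → m ≤ w := by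
  intro w hw hne
  induction F generalizing w with
  | nil => exact absurd (eq_nil_of_suffix_nil hw) hne
  | cons l F ih =>
    have ih' := ih (fun l' h => hLy l' (mem_cons_of_mem l h))
      (fun l' h => hm l' (mem_cons_of_mem l h))
    obtain ⟨p, hp⟩ := hw
    rw [flatten_cons, append_eq_append_iff] at hp
    rcases hp with ⟨c, rfl, rfl⟩ | ⟨q, -, hq⟩
    · rcases eq_or_ne c [] with rfl | hc
      · exact ih' _ suffix_rfl hne
      calc m ≤ p ++ c := hm _ mem_cons_self
        _ ≤ c := (hLy _ mem_cons_self).le_of_suffix (suffix_append p c) hc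
        _ ≤ c ++ F.flatten := le_append_self c _
    · exact ih' w ⟨q, hq.symm⟩ hne

end Lyndon

/-- Appending a Lyndon word `L'` with `L_k ≥ L'` to `W = L_1 ⋯ L_k`
extends the Lyndon factorization to `L_1, …, L_k, L'`, and does not change
the mutual order of the global suffixes starting inside `W`. -/
theorem append_lyndon_factor {α : Type*} [LinearOrder α]
    (F : List (List α)) (hF : F ≠ [])
    (hLy : ∀ l ∈ F, IsLyndon l) (hchain : F.Chain' (· ≥ ·))
    (L' : List α) (hL' : IsLyndon L') (hle : L' ≤ F.getLast hF) :
    ((∀ l ∈ F ++ [L'], IsLyndon l) ∧ (F ++ [L']).Chain' (· ≥ ·) ∧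
        (F ++ [L']).flatten = F.flatten ++ L') ∧
      ∀ i j, i < j → j < F.flatten.length →
        (F.flatten.drop i < F.flatten.drop j ↔
          (F.flatten ++ L').drop i < (F.flatten ++ L').drop j) := by
  have hsuffix : ∀ w, w <:+ F.flatten → w ≠ [] → L' ≤ w := fun w hw hne =>
    hle.trans (le_of_suffix_flatten hLy (hchain.getLast_le hF) w hw hne)
  refine ⟨⟨?_, ?_, by simp⟩,
    fun i j hij hj => drop_lt_drop_iff_append hL'.1 hsuffix hij hj.le⟩
  · simpa [or_imp, forall_and] using ⟨hLy, hL'⟩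
  · exact hchain.append (isChain_singleton L') (by simp [getLast?_eq_some_getLast hF, hle])
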